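/- Let L be an e-cyclic residuated lattice and let X, Y be convex subalgebras of L. Then the set X → Y := {a ∈ L : |a| ∨ |x| ∈ Y for all x ∈ X} is a convex subalgebra of L, X ∩ (X → Y) ⊆ Y, and every convex subalgebra Z of L with X ∩ Z ⊆ Y satisfies Z ⊆ X → Y (i.e., X → Y is the relative pseudocomplement of X relative to Y in the lattice of convex subalgebras). In particular, X^⊥ = {a ∈ L : |a| ∨ |x| = e for all x ∈ X} is the largest convex subalgebra Z of L with X ∩ Z = {e}. -/

import Mathlib

/-!
For `x` fixed, the elements `p ≤ e` with `p ⊔ |x| ∈ Y` are closed under products, since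
`(p ⊔ |x|)(q ⊔ |x|) ≤ pq ⊔ |x| ≤ e` and `Y` is convex. Every operation of `L` applied to
`a, b` gives an element `c` with `|a||b||b||a| ≤ |c|` (e-cyclicity handles the residuals), so
`X → Y` is closed under the operations, and convexity is the same estimate. Maximality holds
because `|a| ⊔ |x|` lies in the convex interval `[|a|, e] ⊆ Z` and in `[|x|, e] ⊆ X`.
Polars are the case `Y = {e}`.
-/

universe u

/-- A residuated lattice: a lattice-ordered monoid with left and right residuals.
`ldiv x z` is `x \ z` and `rdiv z y` is `z / y`. -/
class ResiduatedLattice (α : Type u) extends Lattice α, Monoid α where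
  ldiv : α → α → α
  rdiv : α → α → α
  mul_le_iff_le_ldiv : ∀ x y z : α, x * y ≤ z ↔ y ≤ ldiv x z
  mul_le_iff_le_rdiv : ∀ x y z : α, x * y ≤ z ↔ x ≤ rdiv z y

namespace ResiduatedLattice

variable {α : Type u} [ResiduatedLattice α]

/-- `L` is e-cyclic if `x \ e = e / x` for all `x`. -/
def ECyclic (α : Type u) [ResiduatedLattice α] : Prop :=
  ∀ x : α, ldiv x 1 = rdiv 1 x

/-- Absolute value: `|x| = x ⊓ (e / x) ⊓ e`. -/
def absv (x : α) : α := x ⊓ rdiv 1 x ⊓ 1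

/-- A convex subalgebra: contains `e`, closed under all the operations, and order-convex. -/
structure IsConvexSubalgebra (H : Set α) : Prop where
  one_mem : (1 : α) ∈ H
  mul_mem : ∀ ⦃x⦄, x ∈ H → ∀ ⦃y⦄, y ∈ H → x * y ∈ H
  sup_mem : ∀ ⦃x⦄, x ∈ H → ∀ ⦃y⦄, y ∈ H → x ⊔ y ∈ H
  inf_mem : ∀ ⦃x⦄, x ∈ H → ∀ ⦃y⦄, y ∈ H → x ⊓ y ∈ H
  ldiv_mem : ∀ ⦃x⦄, x ∈ H → ∀ ⦃y⦄, y ∈ H → ldiv x y ∈ H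
  rdiv_mem : ∀ ⦃x⦄, x ∈ H → ∀ ⦃y⦄, y ∈ H → rdiv x y ∈ H
  convex : ∀ ⦃a⦄, a ∈ H → ∀ ⦃b⦄, b ∈ H → ∀ ⦃x⦄, a ≤ x → x ≤ b → x ∈ H

/-- `C[S]`: the smallest convex subalgebra containing `S`. -/
def convexClosure (S : Set α) : Set α :=
  ⋂₀ {H : Set α | IsConvexSubalgebra H ∧ S ⊆ H}

end ResiduatedLattice

open ResiduatedLattice

/-- The polar `S^⊥ = {a : |a| ⊔ |s| = e for all s ∈ S}`. -/
def polar {α : Type u} [ResiduatedLattice α] (S : Set α) : Set α :=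
  {a : α | ∀ s ∈ S, absv a ⊔ absv s = 1}

namespace ResiduatedLattice

variable {α : Type u} [ResiduatedLattice α]

lemma le_ldiv_iff {x y z : α} : y ≤ ldiv x z ↔ x * y ≤ z :=
  (mul_le_iff_le_ldiv x y z).symm

lemma le_rdiv_iff {x y z : α} : x ≤ rdiv z y ↔ x * y ≤ z :=
  (mul_le_iff_le_rdiv x y z).symm

lemma mul_ldiv_le (x z : α) : x * ldiv x z ≤ z := le_ldiv_iff.1 le_rfl

lemma rdiv_mul_le (z y : α) : rdiv z y * y ≤ z := le_rdiv_iff.1 le_rfl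

instance : MulLeftMono α :=
  ⟨fun _ _ _ h => le_ldiv_iff.1 (h.trans (le_ldiv_iff.2 le_rfl))⟩

instance : MulRightMono α :=
  ⟨fun _ _ _ h => le_rdiv_iff.1 (h.trans (le_rdiv_iff.2 le_rfl))⟩

protected lemma mul_sup (x y z : α) : x * (y ⊔ z) = x * y ⊔ x * z :=
  le_antisymm
    (le_ldiv_iff.1 (sup_le (le_ldiv_iff.2 le_sup_left) (le_ldiv_iff.2 le_sup_right)))
    (sup_le (mul_le_mul_right le_sup_left x) (mul_le_mul_right le_sup_right x))

protected lemma sup_mul (x y z : α) : (y ⊔ z) * x = y * x ⊔ z * x :=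
  le_antisymm
    (le_rdiv_iff.1 (sup_le (le_rdiv_iff.2 le_sup_left) (le_rdiv_iff.2 le_sup_right)))
    (sup_le (mul_le_mul_left le_sup_left x) (mul_le_mul_left le_sup_right x))

lemma sup_mul_sup_le {p q r : α} (hp : p ≤ 1) (hq : q ≤ 1) (hr : r ≤ 1) :
    (p ⊔ r) * (q ⊔ r) ≤ p * q ⊔ r := by
  rw [ResiduatedLattice.mul_sup, ResiduatedLattice.sup_mul, ResiduatedLattice.sup_mul]
  exact sup_le (sup_le le_sup_left (le_sup_of_le_right (mul_le_of_le_one_right' hq)))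
    (sup_le (le_sup_of_le_right (mul_le_of_le_one_left' hp))
      (le_sup_of_le_right (mul_le_of_le_one_right' hr)))

lemma absv_le_one (x : α) : absv x ≤ 1 := inf_le_right

lemma absv_le_self (x : α) : absv x ≤ x := inf_le_left.trans inf_le_left

lemma absv_mul_self_le (x : α) : absv x * x ≤ 1 :=
  le_rdiv_iff.1 (inf_le_left.trans inf_le_right)

lemma ECyclic.mul_le_one_comm (hec : ECyclic α) {x y : α} (h : x * y ≤ 1) : y * x ≤ 1 :=
  le_rdiv_iff.1 (hec x ▸ le_ldiv_iff.2 h)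

lemma self_mul_absv_le (hec : ECyclic α) (x : α) : x * absv x ≤ 1 :=
  hec.mul_le_one_comm (absv_mul_self_le x)

lemma le_absv {n x : α} (hx : n ≤ x) (hnx : n * x ≤ 1) (hn : n ≤ 1) : n ≤ absv x :=
  le_inf (le_inf hx (le_rdiv_iff.2 hnx)) hn

lemma absv_mul_absv_le_absv_sup (a b : α) : absv a * absv b ≤ absv (a ⊔ b) := by
  refine le_absv ?_ ?_ (mul_le_one' (absv_le_one a) (absv_le_one b))
  · exact (mul_le_of_le_one_right' (absv_le_one b)).trans ((absv_le_self a).trans le_sup_left)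
  · rw [ResiduatedLattice.mul_sup]
    refine sup_le ?_ ?_
    · calc absv a * absv b * a ≤ absv a * a := by
            rw [mul_assoc]; exact mul_le_mul_right (mul_le_of_le_one_left' (absv_le_one b)) _
        _ ≤ 1 := absv_mul_self_le a
    · calc absv a * absv b * b ≤ absv b * b :=
            mul_le_mul_left (mul_le_of_le_one_left' (absv_le_one a)) _
        _ ≤ 1 := absv_mul_self_le b

lemma absv_mul_absv_le_absv_of_le_of_le {a b c : α} (hac : a ≤ c) (hcb : c ≤ b) :
    absv a * absv b ≤ absv c := by
  refine le_absv ?_ ?_ (mul_le_one' (absv_le_one a) (absv_le_one b))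
  · exact (mul_le_of_le_one_right' (absv_le_one b)).trans ((absv_le_self a).trans hac)
  · calc absv a * absv b * c ≤ absv b * b :=
          mul_le_mul' (mul_le_of_le_one_left' (absv_le_one a)) hcb
      _ ≤ 1 := absv_mul_self_le b

lemma absv_mul_absv_le_absv_inf (a b : α) : absv a * absv b ≤ absv (a ⊓ b) := by
  refine le_absv ?_ ?_ (mul_le_one' (absv_le_one a) (absv_le_one b))
  · exact le_inf ((mul_le_of_le_one_right' (absv_le_one b)).trans (absv_le_self a))
      ((mul_le_of_le_one_left' (absv_le_one a)).trans (absv_le_self b))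
  · calc absv a * absv b * (a ⊓ b) ≤ absv b * b :=
          mul_le_mul' (mul_le_of_le_one_left' (absv_le_one a)) inf_le_right
      _ ≤ 1 := absv_mul_self_le b

lemma absv_mul_absv_mul_absv_mul_absv_le (a b : α) :
    absv a * absv b * (absv b * absv a) ≤ absv a * absv b :=
  mul_le_of_le_one_right' (mul_le_one' (absv_le_one b) (absv_le_one a))

lemma absv_mul_absv_mul_absv_mul_absv_le_absv_mul (a b : α) :
    absv a * absv b * (absv b * absv a) ≤ absv (a * b) := by
  have hab : absv a * absv b ≤ 1 := mul_le_one' (absv_le_one a) (absv_le_one b)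
  refine le_absv ?_ ?_ (mul_le_one' hab (mul_le_one' (absv_le_one b) (absv_le_one a)))
  · exact (absv_mul_absv_mul_absv_mul_absv_le a b).trans
      (mul_le_mul' (absv_le_self a) (absv_le_self b))
  · calc absv a * absv b * (absv b * absv a) * (a * b)
        ≤ absv b * absv a * (a * b) := mul_le_mul_left (mul_le_of_le_one_left' hab) _
      _ = absv b * (absv a * a) * b := by simp only [mul_assoc]
      _ ≤ absv b * b := mul_le_mul_left (mul_le_of_le_one_right' (absv_mul_self_le a)) b
      _ ≤ 1 := absv_mul_self_le b

lemma absv_mul_absv_mul_absv_mul_absv_le_absv_ldiv (hec : ECyclic α) (a b : α) :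
    absv a * absv b * (absv b * absv a) ≤ absv (ldiv a b) := by
  have hab : absv a * absv b ≤ 1 := mul_le_one' (absv_le_one a) (absv_le_one b)
  have hba : absv b * absv a ≤ 1 := mul_le_one' (absv_le_one b) (absv_le_one a)
  refine le_absv (le_ldiv_iff.2 ?_) ?_ (mul_le_one' hab hba)
  · calc a * (absv a * absv b * (absv b * absv a))
        = a * absv a * (absv b * (absv b * absv a)) := by simp only [mul_assoc]
      _ ≤ absv b * (absv b * absv a) := mul_le_of_le_one_left' (self_mul_absv_le hec a)
      _ ≤ b := (mul_le_of_le_one_right' hba).trans (absv_le_self b)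
  · calc absv a * absv b * (absv b * absv a) * ldiv a b
        ≤ absv b * (absv a * ldiv a b) := by
          rw [← mul_assoc (absv b)]; exact mul_le_mul_left (mul_le_of_le_one_left' hab) _
      _ ≤ absv b * b :=
          mul_le_mul_right ((mul_le_mul_left (absv_le_self a) _).trans (mul_ldiv_le a b)) _
      _ ≤ 1 := absv_mul_self_le b

lemma absv_mul_absv_mul_absv_mul_absv_le_absv_rdiv (hec : ECyclic α) (a b : α) :
    absv a * absv b * (absv b * absv a) ≤ absv (rdiv a b) := by
  have hab : absv a * absv b ≤ 1 := mul_le_one' (absv_le_one a) (absv_le_one b)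
  have hba : absv b * absv a ≤ 1 := mul_le_one' (absv_le_one b) (absv_le_one a)
  refine le_absv (le_rdiv_iff.2 ?_) ?_ (mul_le_one' hab hba)
  · calc absv a * absv b * (absv b * absv a) * b ≤ absv a * absv b * b :=
          mul_le_mul_left (absv_mul_absv_mul_absv_mul_absv_le a b) b
      _ ≤ a := by
          rw [mul_assoc]
          exact (mul_le_of_le_one_right' (absv_mul_self_le b)).trans (absv_le_self a)
  · have hright : rdiv a b * (absv b * absv a) ≤ 1 :=
      calc rdiv a b * (absv b * absv a) ≤ rdiv a b * b * absv a := by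
            rw [mul_assoc]; exact mul_le_mul_right (mul_le_mul_left (absv_le_self b) _) _
        _ ≤ a * absv a := mul_le_mul_left (rdiv_mul_le a b) _
        _ ≤ 1 := self_mul_absv_le hec a
    exact (mul_le_mul_left (mul_le_of_le_one_left' hab) _).trans (hec.mul_le_one_comm hright)

lemma absv_one : absv (1 : α) = 1 :=
  le_antisymm (absv_le_one 1) (le_absv le_rfl (one_mul 1).le le_rfl)

namespace IsConvexSubalgebra

variable {H : Set α}

lemma absv_mem (hH : IsConvexSubalgebra H) {a : α} (ha : a ∈ H) : absv a ∈ H :=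
  hH.inf_mem (hH.inf_mem ha (hH.rdiv_mem hH.one_mem ha)) hH.one_mem

lemma mem_of_absv_mem (hH : IsConvexSubalgebra H) {a : α} (ha : absv a ∈ H) : a ∈ H :=
  hH.convex ha (hH.ldiv_mem ha hH.one_mem) (absv_le_self a)
    (le_ldiv_iff.2 (absv_mul_self_le a))

lemma absv_sup_absv_mem (hH : IsConvexSubalgebra H) {a : α} (ha : a ∈ H) (b : α) :
    absv a ⊔ absv b ∈ H :=
  hH.convex (hH.absv_mem ha) hH.one_mem le_sup_left (sup_le (absv_le_one a) (absv_le_one b))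

lemma sup_mem_of_le {p r t : α} (hH : IsConvexSubalgebra H) (hp : p ⊔ t ∈ H) (hpr : p ≤ r)
    (hr : r ≤ 1) (ht : t ≤ 1) : r ⊔ t ∈ H :=
  hH.convex hp hH.one_mem (sup_le_sup_right hpr t) (sup_le hr ht)

lemma mul_sup_mem {p q t : α} (hH : IsConvexSubalgebra H) (hp : p ⊔ t ∈ H) (hq : q ⊔ t ∈ H)
    (hp1 : p ≤ 1) (hq1 : q ≤ 1) (ht : t ≤ 1) : p * q ⊔ t ∈ H :=
  hH.convex (hH.mul_mem hp hq) hH.one_mem (sup_mul_sup_le hp1 hq1 ht)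
    (sup_le (mul_le_one' hp1 hq1) ht)

end IsConvexSubalgebra

lemma isConvexSubalgebra_singleton_one : IsConvexSubalgebra ({1} : Set α) where
  one_mem := rfl
  mul_mem := by rintro _ rfl _ rfl; exact mul_one 1
  sup_mem := by rintro _ rfl _ rfl; exact sup_idem 1
  inf_mem := by rintro _ rfl _ rfl; exact inf_idem 1
  ldiv_mem := by
    rintro _ rfl _ rfl
    exact le_antisymm ((one_mul _).symm.le.trans (mul_ldiv_le 1 1))
      (le_ldiv_iff.2 (mul_one 1).le)
  rdiv_mem := by
    rintro _ rfl _ rfl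
    exact le_antisymm ((mul_one _).symm.le.trans (rdiv_mul_le 1 1))
      (le_rdiv_iff.2 (mul_one 1).le)
  convex := by rintro _ rfl _ rfl x h1 h2; exact le_antisymm h2 h1

/-- `X → Y` of the paper. -/
def relPseudocomplement (X Y : Set α) : Set α :=
  {a | ∀ x ∈ X, absv a ⊔ absv x ∈ Y}

variable {X Y : Set α}

lemma polar_eq_relPseudocomplement : polar X = relPseudocomplement X {1} := rfl

lemma mem_relPseudocomplement_of_le_absv (hY : IsConvexSubalgebra Y) {a b c : α}
    (ha : a ∈ relPseudocomplement X Y) (hb : b ∈ relPseudocomplement X Y)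
    (h : absv a * absv b * (absv b * absv a) ≤ absv c) : c ∈ relPseudocomplement X Y := by
  intro x hx
  have hab := hY.mul_sup_mem (ha x hx) (hb x hx) (absv_le_one a) (absv_le_one b) (absv_le_one x)
  have hba := hY.mul_sup_mem (hb x hx) (ha x hx) (absv_le_one b) (absv_le_one a) (absv_le_one x)
  exact hY.sup_mem_of_le (hY.mul_sup_mem hab hba (mul_le_one' (absv_le_one a) (absv_le_one b))
    (mul_le_one' (absv_le_one b) (absv_le_one a)) (absv_le_one x)) h (absv_le_one c)
    (absv_le_one x)

lemma isConvexSubalgebra_relPseudocomplement (hec : ECyclic α) (hY : IsConvexSubalgebra Y) :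
    IsConvexSubalgebra (relPseudocomplement X Y) where
  one_mem x _ := by rw [absv_one, sup_eq_left.2 (absv_le_one x)]; exact hY.one_mem
  mul_mem _ ha _ hb := mem_relPseudocomplement_of_le_absv hY ha hb
    (absv_mul_absv_mul_absv_mul_absv_le_absv_mul _ _)
  sup_mem _ ha _ hb := mem_relPseudocomplement_of_le_absv hY ha hb
    ((absv_mul_absv_mul_absv_mul_absv_le _ _).trans (absv_mul_absv_le_absv_sup _ _))
  inf_mem _ ha _ hb := mem_relPseudocomplement_of_le_absv hY ha hb
    ((absv_mul_absv_mul_absv_mul_absv_le _ _).trans (absv_mul_absv_le_absv_inf _ _))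
  ldiv_mem _ ha _ hb := mem_relPseudocomplement_of_le_absv hY ha hb
    (absv_mul_absv_mul_absv_mul_absv_le_absv_ldiv hec _ _)
  rdiv_mem _ ha _ hb := mem_relPseudocomplement_of_le_absv hY ha hb
    (absv_mul_absv_mul_absv_mul_absv_le_absv_rdiv hec _ _)
  convex _ ha _ hb _ hac hcb := mem_relPseudocomplement_of_le_absv hY ha hb
    ((absv_mul_absv_mul_absv_mul_absv_le _ _).trans (absv_mul_absv_le_absv_of_le_of_le hac hcb))

lemma inter_relPseudocomplement_subset (hY : IsConvexSubalgebra Y) :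
    X ∩ relPseudocomplement X Y ⊆ Y := fun a ⟨haX, ha⟩ =>
  hY.mem_of_absv_mem (sup_idem (absv a) ▸ ha a haX)

lemma subset_relPseudocomplement {Z : Set α} (hX : IsConvexSubalgebra X)
    (hZ : IsConvexSubalgebra Z) (hXZ : X ∩ Z ⊆ Y) : Z ⊆ relPseudocomplement X Y := by
  intro a ha x hx
  exact hXZ ⟨sup_comm (absv x) (absv a) ▸ hX.absv_sup_absv_mem hx a,
    hZ.absv_sup_absv_mem ha x⟩

end ResiduatedLattice

/-- relative pseudocomplements and polars in the lattice of convex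
subalgebras. -/
theorem stmt7 {α : Type u} [ResiduatedLattice α] (hec : ECyclic α)
    (X Y : Set α) (hX : IsConvexSubalgebra X) (hY : IsConvexSubalgebra Y) :
    IsConvexSubalgebra {a : α | ∀ x ∈ X, absv a ⊔ absv x ∈ Y} ∧
    X ∩ {a : α | ∀ x ∈ X, absv a ⊔ absv x ∈ Y} ⊆ Y ∧
    (∀ Z : Set α, IsConvexSubalgebra Z → X ∩ Z ⊆ Y →
      Z ⊆ {a : α | ∀ x ∈ X, absv a ⊔ absv x ∈ Y}) ∧
    IsConvexSubalgebra (polar X) ∧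
    X ∩ polar X = {1} ∧
    (∀ Z : Set α, IsConvexSubalgebra Z → X ∩ Z = {1} → Z ⊆ polar X) := by
  rw [polar_eq_relPseudocomplement]
  have hpolar : IsConvexSubalgebra (relPseudocomplement X {1}) :=
    isConvexSubalgebra_relPseudocomplement hec isConvexSubalgebra_singleton_one
  refine ⟨isConvexSubalgebra_relPseudocomplement hec hY, inter_relPseudocomplement_subset hY,
    fun Z hZ hXZ => subset_relPseudocomplement hX hZ hXZ, hpolar, ?_,
    fun Z hZ hXZ => subset_relPseudocomplement hX hZ hXZ.subset⟩
  exact (inter_relPseudocomplement_subset isConvexSubalgebra_singleton_one).antisymm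
    (Set.singleton_subset_iff.2 ⟨hX.one_mem, hpolar.one_mem⟩)
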